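/- Let M be the star with countably many branches, with metric d₁([x,m],[y,n]) = |x − y|/m if m = n and x/m + y/n otherwise, and define f : M → ℝ by f([x,n]) = x (well-defined on the quotient). Then f is geodesically convex on (M, d₁): for every geodesic γ from p to q and every t ∈ [0,1], f(γ(t)) ≤ (1 − t) f(p) + t f(q). -/

import Mathlib

/-- Points of `[0,1] × ℕ≥1`: countably many copies of the unit interval. -/
abbrev StarPoint : Type := Set.Icc (0:ℝ) 1 × {n : ℕ // 1 ≤ n}

/-- The gluing relation: `(x,m) ∼ (y,n) ↔ (x = y = 0) ∨ (x = y ∧ m = n)`. -/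
def starSetoid : Setoid StarPoint where
  r a b := (a.1.1 = 0 ∧ b.1.1 = 0) ∨ (a.1.1 = b.1.1 ∧ a.2 = b.2)
  iseqv := by
    constructor
    · intro a; exact Or.inr ⟨rfl, rfl⟩
    · rintro a b (⟨h1, h2⟩ | ⟨h1, h2⟩)
      · exact Or.inl ⟨h2, h1⟩
      · exact Or.inr ⟨h1.symm, h2.symm⟩
    · rintro a b c (⟨h1, h2⟩ | ⟨h1, h2⟩) (⟨g1, g2⟩ | ⟨g1, g2⟩)
      · exact Or.inl ⟨h1, g2⟩
      · exact Or.inl ⟨h1, g1 ▸ h2⟩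
      · exact Or.inl ⟨h1.trans g1, g2⟩
      · exact Or.inr ⟨h1.trans g1, h2.trans g2⟩

/-- The star with countably many branches: the quotient of `[0,1] × ℕ≥1` gluing all the
origins together. -/
def StarSpace : Type := Quotient starSetoid

/-- The distance `d₁((x,m),(y,n)) = |x-y|/m` if `m = n`, and `x/m + y/n` otherwise. -/
noncomputable def d1 (a b : StarPoint) : ℝ :=
  if a.2 = b.2 then |a.1.1 - b.1.1| / (a.2.1 : ℝ)
  else a.1.1 / (a.2.1 : ℝ) + b.1.1 / (b.2.1 : ℝ)

lemma d1_self (a : StarPoint) : d1 a a = 0 := by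
  unfold d1; rw [if_pos rfl, sub_self, abs_zero, zero_div]

lemma d1_comm (a b : StarPoint) : d1 a b = d1 b a := by
  unfold d1
  rcases eq_or_ne a.2 b.2 with h | h
  · rw [if_pos h, if_pos h.symm, abs_sub_comm, h]
  · rw [if_neg h, if_neg (Ne.symm h), add_comm]

lemma d1_triangle (a b c : StarPoint) : d1 a c ≤ d1 a b + d1 b c := by
  obtain ⟨⟨x, hx0, hx1⟩, m⟩ := a
  obtain ⟨⟨y, hy0, hy1⟩, n⟩ := b
  obtain ⟨⟨z, hz0, hz1⟩, k⟩ := c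
  have hm : (0:ℝ) < (m.1 : ℝ) := by exact_mod_cast m.2
  have hn : (0:ℝ) < (n.1 : ℝ) := by exact_mod_cast n.2
  have hk : (0:ℝ) < (k.1 : ℝ) := by exact_mod_cast k.2
  unfold d1
  dsimp only
  rcases eq_or_ne m n with hmn | hmn <;> rcases eq_or_ne n k with hnk | hnk
  · subst hmn; subst hnk
    rw [if_pos rfl, if_pos rfl, if_pos rfl, ← add_div]
    gcongr
    exact abs_sub_le x y z
  · subst hmn
    rw [if_neg hnk, if_pos rfl, if_neg hnk]
    have h1 : x / (m.1:ℝ) ≤ (|x - y| + y) / (m.1:ℝ) := by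
      gcongr
      have := le_abs_self (x - y); linarith
    rw [add_div] at h1
    linarith
  · subst hnk
    rw [if_neg hmn, if_neg hmn, if_pos rfl]
    have h1 : z / (n.1:ℝ) ≤ (|y - z| + y) / (n.1:ℝ) := by
      gcongr
      have := le_abs_self (z - y); rw [abs_sub_comm] at this; linarith
    rw [add_div] at h1
    linarith
  · have hyn : 0 ≤ y / (n.1:ℝ) := div_nonneg hy0 hn.le
    rcases eq_or_ne m k with hmk | hmk
    · subst hmk
      rw [if_pos rfl, if_neg hmn, if_neg hnk]
      have h0 : |x - z| ≤ x + z := by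
        rw [abs_sub_le_iff]; constructor <;> linarith
      have h1 : |x - z| / (m.1:ℝ) ≤ (x + z) / (m.1:ℝ) := by gcongr
      rw [add_div] at h1
      linarith
    · rw [if_neg hmk, if_neg hmn, if_neg hnk]
      linarith

lemma d1_rel_of_eq_zero {a b : StarPoint} (h : d1 a b = 0) : starSetoid.r a b := by
  have hm : (0:ℝ) < (a.2.1 : ℝ) := by exact_mod_cast a.2.2
  have hn : (0:ℝ) < (b.2.1 : ℝ) := by exact_mod_cast b.2.2
  unfold d1 at h
  split_ifs at h with hab
  · refine Or.inr ⟨?_, hab⟩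
    have := div_eq_zero_iff.mp h
    rcases this with h' | h'
    · have : a.1.1 - b.1.1 = 0 := abs_eq_zero.mp h'
      linarith
    · exact absurd h' hm.ne'
  · have h1 : 0 ≤ a.1.1 / (a.2.1 : ℝ) := div_nonneg a.1.2.1 hm.le
    have h2 : 0 ≤ b.1.1 / (b.2.1 : ℝ) := div_nonneg b.1.2.1 hn.le
    have ha : a.1.1 / (a.2.1 : ℝ) = 0 := by linarith
    have hb : b.1.1 / (b.2.1 : ℝ) = 0 := by linarith
    refine Or.inl ⟨?_, ?_⟩
    · rcases div_eq_zero_iff.mp ha with h' | h'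
      · exact h'
      · exact absurd h' hm.ne'
    · rcases div_eq_zero_iff.mp hb with h' | h'
      · exact h'
      · exact absurd h' hn.ne'

lemma d1_of_fst_eq_zero {a : StarPoint} (b : StarPoint) (ha : a.1.1 = 0) :
    d1 a b = b.1.1 / (b.2.1 : ℝ) := by
  unfold d1
  split_ifs with h
  · rw [ha, h, zero_sub, abs_neg, abs_of_nonneg b.1.2.1]
  · rw [ha, zero_div, zero_add]

lemma d1_congr_left {a₁ a₂ : StarPoint} (b : StarPoint) (h : starSetoid.r a₁ a₂) :
    d1 a₁ b = d1 a₂ b := by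
  rcases h with ⟨h1, h2⟩ | ⟨h1, h2⟩
  · rw [d1_of_fst_eq_zero b h1, d1_of_fst_eq_zero b h2]
  · have : a₁ = a₂ := Prod.ext (Subtype.ext h1) h2
    rw [this]

/-- `d₁` descends to the quotient. -/
noncomputable def starDist1 : StarSpace → StarSpace → ℝ :=
  Quotient.lift₂ d1 (fun a₁ b₁ a₂ b₂ ha hb => by
    calc d1 a₁ b₁ = d1 a₂ b₁ := d1_congr_left b₁ ha
    _ = d1 b₁ a₂ := d1_comm _ _
    _ = d1 b₂ a₂ := d1_congr_left a₂ hb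
    _ = d1 a₂ b₂ := d1_comm _ _)

/-- The star with countably many branches, as a metric space for `d₁`. -/
noncomputable instance StarSpace.metricSpace : MetricSpace StarSpace where
  dist := starDist1
  dist_self := by
    rintro ⟨a⟩; exact d1_self a
  dist_comm := by
    rintro ⟨a⟩ ⟨b⟩; exact d1_comm a b
  dist_triangle := by
    rintro ⟨a⟩ ⟨b⟩ ⟨c⟩; exact d1_triangle a b c
  eq_of_dist_eq_zero := by
    rintro ⟨a⟩ ⟨b⟩ h
    exact Quotient.sound (d1_rel_of_eq_zero h)

/-- The class of a point of `[0,1] × ℕ≥1` in the star. -/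
def StarSpace.mk (a : StarPoint) : StarSpace := Quotient.mk starSetoid a

lemma StarSpace.dist_mk (a b : StarPoint) :
    dist (StarSpace.mk a) (StarSpace.mk b) = d1 a b := rfl

/-- The origin of the star: the common class of the points `(0, n)`. -/
def StarSpace.origin : StarSpace := StarSpace.mk (⟨0, by norm_num⟩, ⟨1, le_refl 1⟩)

/-- A geodesic from `p` to `q` in a metric space, parametrized by `[0,1]`
(proportionally to arclength). -/
def IsGeodesic {X : Type*} [MetricSpace X] (p q : X) (γ : Set.Icc (0:ℝ) 1 → X) : Prop :=
  γ ⟨0, by norm_num⟩ = p ∧ γ ⟨1, by norm_num⟩ = q ∧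
    ∀ s t : Set.Icc (0:ℝ) 1, dist (γ s) (γ t) = |(s:ℝ) - (t:ℝ)| * dist p q

/-- Geodesic convexity for a real-valued function on a metric space. -/
def GeodesicallyConvexReal {X : Type*} [MetricSpace X] (f : X → ℝ) : Prop :=
  ∀ (p q : X) (γ : Set.Icc (0:ℝ) 1 → X), IsGeodesic p q γ →
    ∀ t : Set.Icc (0:ℝ) 1, f (γ t) ≤ (1 - (t:ℝ)) * f p + (t:ℝ) * f q

/-- The height function `f [x, n] = x`, well-defined on the quotient. -/
def starF : StarSpace → ℝ :=
  Quotient.lift (fun a : StarPoint => a.1.1) (by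
    rintro a b (⟨h1, h2⟩ | ⟨h1, h2⟩) <;> try dsimp only
    · rw [h1, h2]
    · exact h1)

/-!
Call `c` between `a` and `b` when `d(a,c) + d(c,b) = d(a,b)`, and let `x, y, z` be the heights of
`a, b, c`. Every such `c` satisfies `z · d(a,b) ≤ d(c,b) · x + d(a,c) · y`: either all three points
lie on one branch, where the height is affine in the distance; or `c` shares the branch `m` of `a`
but not the branch `n` of `b`, so `c` lies between `a` and the origin and the gap is
`(x - z) y (1/m + 1/n) ≥ 0` (symmetrically with `a` and `b` exchanged); or `c` is on neither branch,
which forces `c` to be the origin. A point `γ t` of a geodesic lies between its endpoints, at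
distances `t · d(p,q)` and `(1 - t) · d(p,q)`, so dividing by `d(p,q)` gives convexity.
-/

section Geodesic

variable {X : Type*} [MetricSpace X] {p q : X} {γ : Set.Icc (0:ℝ) 1 → X}

lemma IsGeodesic.dist_left_eq (hγ : IsGeodesic p q γ) (t : Set.Icc (0:ℝ) 1) :
    dist p (γ t) = t * dist p q := by
  obtain ⟨h0, -, hd⟩ := hγ
  rw [← h0, hd, h0, zero_sub, abs_neg, abs_of_nonneg t.2.1]

lemma IsGeodesic.dist_right_eq (hγ : IsGeodesic p q γ) (t : Set.Icc (0:ℝ) 1) :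
    dist (γ t) q = (1 - t) * dist p q := by
  obtain ⟨-, h1, hd⟩ := hγ
  rw [← h1, hd, h1, abs_sub_comm, abs_of_nonneg (sub_nonneg.2 t.2.2)]

lemma GeodesicallyConvexReal.of_dist_add_dist_eq {f : X → ℝ}
    (hf : ∀ p q r : X, dist p r + dist r q = dist p q →
      f r * dist p q ≤ dist r q * f p + dist p r * f q) :
    GeodesicallyConvexReal f := by
  intro p q γ hγ t
  have hl := hγ.dist_left_eq t
  have hr := hγ.dist_right_eq t
  rcases (dist_nonneg : 0 ≤ dist p q).eq_or_lt with hD | hD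
  · have hpq : p = q := dist_eq_zero.1 hD.symm
    have hpt : p = γ t := dist_eq_zero.1 (by rw [hl, ← hD, mul_zero])
    rw [← hpt, ← hpq]
    linarith
  · have hbetween := hf p q (γ t) (by rw [hl, hr]; ring)
    rw [hl, hr] at hbetween
    refine le_of_mul_le_mul_right ?_ hD
    linarith

end Geodesic

lemma mul_abs_sub_eq_of_abs_sub_add_abs_sub_eq {R : Type*} [CommRing R] [LinearOrder R]
    [IsStrictOrderedRing R] {x y z : R} (h : |x - z| + |z - y| = |x - y|) :
    z * |x - y| = |z - y| * x + |x - z| * y := by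
  rw [← sub_add_sub_cancel x z y, eq_comm, abs_add_eq_add_abs_iff] at h
  rcases h with ⟨hxz, hzy⟩ | ⟨hxz, hzy⟩
  · rw [abs_of_nonneg hxz, abs_of_nonneg hzy, abs_of_nonneg (by linarith : 0 ≤ x - y)]; ring
  · rw [abs_of_nonpos hxz, abs_of_nonpos hzy, abs_of_nonpos (by linarith : x - y ≤ 0)]; ring

namespace StarPoint

lemma branch_pos (a : StarPoint) : (0:ℝ) < a.2.1 := by exact_mod_cast a.2.2

lemma d1_of_snd_eq {a b : StarPoint} (h : a.2 = b.2) : d1 a b = |a.1.1 - b.1.1| / a.2.1 :=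
  if_pos h

lemma d1_of_snd_ne {a b : StarPoint} (h : a.2 ≠ b.2) :
    d1 a b = a.1.1 / a.2.1 + b.1.1 / b.2.1 :=
  if_neg h

lemma d1_nonneg (a b : StarPoint) : 0 ≤ d1 a b := by
  rw [← StarSpace.dist_mk]
  exact dist_nonneg

lemma d1_le_add (a b : StarPoint) : d1 a b ≤ a.1.1 / a.2.1 + b.1.1 / b.2.1 := by
  let o : StarPoint := (⟨0, by norm_num⟩, a.2)
  calc d1 a b ≤ d1 a o + d1 o b := d1_triangle a o b
    _ = a.1.1 / a.2.1 + b.1.1 / b.2.1 := by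
      rw [d1_comm a o, d1_of_fst_eq_zero a rfl, d1_of_fst_eq_zero b rfl]

variable {a b c : StarPoint}

lemma fst_mul_d1_le_of_snd_eq_of_snd_eq (hac : a.2 = c.2) (hcb : c.2 = b.2)
    (h : d1 a c + d1 c b = d1 a b) : c.1.1 * d1 a b ≤ d1 c b * a.1.1 + d1 a c * b.1.1 := by
  rw [d1_of_snd_eq hac, d1_of_snd_eq hcb, d1_of_snd_eq (hac.trans hcb), hac] at h ⊢
  rw [← add_div, div_left_inj' (branch_pos c).ne'] at h
  refine le_of_eq ?_
  rw [mul_div_assoc', mul_abs_sub_eq_of_abs_sub_add_abs_sub_eq h]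
  ring

lemma fst_mul_d1_le_of_snd_eq_of_snd_ne (hac : a.2 = c.2) (hcb : c.2 ≠ b.2)
    (h : d1 a c + d1 c b = d1 a b) : c.1.1 * d1 a b ≤ d1 c b * a.1.1 + d1 a c * b.1.1 := by
  have hab : a.2 ≠ b.2 := fun e => hcb (hac.symm.trans e)
  rw [d1_of_snd_eq hac, d1_of_snd_ne hcb, d1_of_snd_ne hab, hac] at h ⊢
  have hxz : |a.1.1 - c.1.1| = a.1.1 - c.1.1 := by
    have h' : |a.1.1 - c.1.1| / c.2.1 + c.1.1 / c.2.1 = a.1.1 / c.2.1 := by linarith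
    rw [← add_div, div_left_inj' (branch_pos c).ne'] at h'
    linarith
  have hgap : 0 ≤ (a.1.1 - c.1.1) * b.1.1 * ((c.2.1 : ℝ)⁻¹ + (b.2.1 : ℝ)⁻¹) :=
    mul_nonneg (mul_nonneg (hxz ▸ abs_nonneg _) b.1.2.1)
      (add_nonneg (inv_nonneg.2 (branch_pos c).le) (inv_nonneg.2 (branch_pos b).le))
  rw [hxz]
  calc c.1.1 * (a.1.1 / c.2.1 + b.1.1 / b.2.1)
      = (c.1.1 / c.2.1 + b.1.1 / b.2.1) * a.1.1 + (a.1.1 - c.1.1) / c.2.1 * b.1.1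
          - (a.1.1 - c.1.1) * b.1.1 * ((c.2.1 : ℝ)⁻¹ + (b.2.1 : ℝ)⁻¹) := by ring
    _ ≤ _ := sub_le_self _ hgap

lemma fst_mul_d1_le_of_snd_ne_of_snd_eq (hac : a.2 ≠ c.2) (hcb : c.2 = b.2)
    (h : d1 a c + d1 c b = d1 a b) : c.1.1 * d1 a b ≤ d1 c b * a.1.1 + d1 a c * b.1.1 := by
  have h' : d1 b c + d1 c a = d1 b a := by rw [d1_comm b c, d1_comm c a, d1_comm b a]; linarith
  have := fst_mul_d1_le_of_snd_eq_of_snd_ne hcb.symm (Ne.symm hac) h'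
  rw [d1_comm b a, d1_comm c a, d1_comm b c] at this
  linarith

lemma fst_mul_d1_le_of_snd_ne_of_snd_ne (hac : a.2 ≠ c.2) (hcb : c.2 ≠ b.2)
    (h : d1 a c + d1 c b = d1 a b) : c.1.1 * d1 a b ≤ d1 c b * a.1.1 + d1 a c * b.1.1 := by
  have hc : c.1.1 = 0 := by
    have hab := d1_le_add a b
    have hc_nonneg := div_nonneg c.1.2.1 (branch_pos c).le
    rw [d1_of_snd_ne hac, d1_of_snd_ne hcb] at h
    exact (div_eq_zero_iff.1 (by linarith)).resolve_right (branch_pos c).ne'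
  rw [hc, zero_mul]
  exact add_nonneg (mul_nonneg (d1_nonneg c b) a.1.2.1) (mul_nonneg (d1_nonneg a c) b.1.2.1)

lemma fst_mul_d1_le_of_d1_add_d1_eq (h : d1 a c + d1 c b = d1 a b) :
    c.1.1 * d1 a b ≤ d1 c b * a.1.1 + d1 a c * b.1.1 := by
  rcases eq_or_ne a.2 c.2 with hac | hac <;> rcases eq_or_ne c.2 b.2 with hcb | hcb
  · exact fst_mul_d1_le_of_snd_eq_of_snd_eq hac hcb h
  · exact fst_mul_d1_le_of_snd_eq_of_snd_ne hac hcb h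
  · exact fst_mul_d1_le_of_snd_ne_of_snd_eq hac hcb h
  · exact fst_mul_d1_le_of_snd_ne_of_snd_ne hac hcb h

end StarPoint

lemma starF_mul_dist_le_of_dist_add_dist_eq {p q r : StarSpace}
    (h : dist p r + dist r q = dist p q) :
    starF r * dist p q ≤ dist r q * starF p + dist p r * starF q := by
  induction p using Quotient.inductionOn
  induction q using Quotient.inductionOn
  induction r using Quotient.inductionOn
  exact StarPoint.fst_mul_d1_le_of_d1_add_d1_eq h

/-- The function `f [x,n] = x` is geodesically convex on the star with
countably many branches equipped with the metric `d₁`. -/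
theorem starF_geodesicallyConvex_d1 : GeodesicallyConvexReal starF :=
  .of_dist_add_dist_eq fun _ _ _ => starF_mul_dist_le_of_dist_add_dist_eq
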